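/- Let G be a connected graph of order n ≥ 2, H a connected non-bipartite graph of order n′, and v ∈ V(H). Then dim_l(G∘_v H) = n if and only if dim_l(H) = 2 and the root v belongs to some local metric basis of H. -/

import Mathlib

open SimpleGraph

/-- A set `S` is a local metric generator for `G` if every pair of adjacent
vertices is distinguished, by distance, by some element of `S`. -/
def IsLocalMetricGenerator {V : Type*} (G : SimpleGraph V) (S : Set V) : Prop :=
  ∀ ⦃u v : V⦄, G.Adj u v → ∃ w ∈ S, G.dist u w ≠ G.dist v w

/-- The local metric dimension of a graph. -/
noncomputable def localMetricDim {V : Type*} [Fintype V] (G : SimpleGraph V) : ℕ :=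
  sInf {k | ∃ S : Finset V, IsLocalMetricGenerator G ↑S ∧ S.card = k}

/-- A local metric basis: a local metric generator of minimum cardinality. -/
def IsLocalMetricBasis {V : Type*} [Fintype V] (G : SimpleGraph V) (S : Finset V) : Prop :=
  IsLocalMetricGenerator G ↑S ∧ S.card = localMetricDim G

/-- The rooted product G ∘_v H: a copy of H is attached at its root v to each
vertex of G. Vertex (g, v) plays the role of the g-th vertex of G. -/
def rootedProd {V W : Type*} (G : SimpleGraph V) (H : SimpleGraph W) (v : W) :
    SimpleGraph (V × W) :=
  SimpleGraph.fromRel (fun a b =>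
    (a.1 = b.1 ∧ H.Adj a.2 b.2) ∨ (a.2 = v ∧ b.2 = v ∧ G.Adj a.1 b.1))

section Aux

variable {V W : Type*} {G : SimpleGraph V} {H : SimpleGraph W} {v : W}

lemma rootedProd_adj {a b : V × W} : (rootedProd G H v).Adj a b ↔
    a ≠ b ∧ ((a.1 = b.1 ∧ H.Adj a.2 b.2) ∨ (a.2 = v ∧ b.2 = v ∧ G.Adj a.1 b.1)) := by
  constructor
  · rintro ⟨hne, h | h⟩
    · exact ⟨hne, h⟩
    · rcases h with ⟨h1, h2⟩ | ⟨h1, h2, h3⟩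
      · exact ⟨hne, Or.inl ⟨h1.symm, h2.symm⟩⟩
      · exact ⟨hne, Or.inr ⟨h2, h1, h3.symm⟩⟩
  · rintro ⟨hne, h⟩
    exact ⟨hne, Or.inl h⟩

/-- The hom embedding copy `g` of `H`. -/
def copyHom (G : SimpleGraph V) (H : SimpleGraph W) (v : W) (g : V) : H →g rootedProd G H v where
  toFun w := (g, w)
  map_rel' := by
    intro a b hab
    exact rootedProd_adj.2 ⟨by simp [hab.ne], Or.inl ⟨rfl, hab⟩⟩

/-- The hom embedding `G` as the roots. -/
def rootHom (G : SimpleGraph V) (H : SimpleGraph W) (v : W) : G →g rootedProd G H v where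
  toFun g := (g, v)
  map_rel' := by
    intro a b hab
    exact rootedProd_adj.2 ⟨by simp [hab.ne], Or.inr ⟨rfl, rfl, hab⟩⟩

lemma rootedProd_connected (hG : G.Connected) (hH : H.Connected) :
    (rootedProd G H v).Connected := by
  have hne : Nonempty (V × W) := ⟨⟨hG.nonempty.some, hH.nonempty.some⟩⟩
  refine ⟨fun x y => ?_⟩
  obtain ⟨g, a⟩ := x; obtain ⟨g', b⟩ := y
  have h1 : (rootedProd G H v).Reachable (g, a) (g, v) := (hH a v).map (copyHom G H v g)
  have h2 : (rootedProd G H v).Reachable (g, v) (g', v) := (hG g g').map (rootHom G H v)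
  have h3 : (rootedProd G H v).Reachable (g', v) (g', b) := (hH v b).map (copyHom G H v g')
  exact (h1.trans h2).trans h3

/-- Projection of a walk to `H` (dropping root-to-root steps). -/
lemma exists_walk_snd {x y : V × W} (p : (rootedProd G H v).Walk x y) :
    ∃ q : H.Walk x.2 y.2, q.length ≤ p.length := by
  induction p with
  | nil => exact ⟨Walk.nil, le_rfl⟩
  | @cons x z y h p ih =>
    obtain ⟨q, hq⟩ := ih
    rcases (rootedProd_adj.1 h).2 with ⟨-, hadj⟩ | ⟨h1, h2, -⟩
    · exact ⟨Walk.cons hadj q, by simpa using Nat.succ_le_succ hq⟩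
    · refine ⟨q.copy (h2.trans h1.symm) rfl, ?_⟩
      simp only [Walk.length_copy, Walk.length_cons]
      omega

lemma dist_snd_le {x y : V × W} (hr : (rootedProd G H v).Reachable x y) :
    H.dist x.2 y.2 ≤ (rootedProd G H v).dist x y := by
  obtain ⟨p, hp⟩ := hr.exists_walk_length_eq_dist
  obtain ⟨q, hq⟩ := exists_walk_snd p
  exact le_trans (SimpleGraph.dist_le q) (hp ▸ hq)

/-- Distance within a copy equals distance in `H`. -/
lemma dist_copy (hH : H.Connected) (g : V) (a b : W) :
    (rootedProd G H v).dist (g, a) (g, b) = H.dist a b := by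
  have hreach : (rootedProd G H v).Reachable (g, a) (g, b) := by
    have := (hH a b).map (copyHom G H v g)
    exact this
  refine le_antisymm ?_ (dist_snd_le hreach)
  obtain ⟨q, hq⟩ := (hH a b).exists_walk_length_eq_dist
  have h2 : ((q.map (copyHom G H v g)).copy rfl rfl).length = H.dist a b := by
    simpa [Walk.length_map] using hq
  exact h2 ▸ SimpleGraph.dist_le _

/-- Any walk leaving copy `x.1` passes through the root of that copy. -/
lemma root_mem_support {x y : V × W} (p : (rootedProd G H v).Walk x y) (hxy : x.1 ≠ y.1) :
    (x.1, v) ∈ p.support := by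
  induction p with
  | nil => exact absurd rfl hxy
  | @cons x z y h p ih =>
    rcases (rootedProd_adj.1 h).2 with ⟨h1, -⟩ | ⟨h1, -, -⟩
    · have : (z.1, v) ∈ p.support := ih (h1 ▸ hxy)
      rw [Walk.support_cons]
      exact List.mem_cons_of_mem _ (h1 ▸ this)
    · rw [Walk.support_cons]
      have : (x.1, v) = x := by rw [← h1]
      rw [this]
      exact List.mem_cons_self

/-- Cross-copy distance splits at the root. -/
lemma dist_cross (hG : G.Connected) (hH : H.Connected) {g g' : V} (hgg : g ≠ g') (a b : W) :
    (rootedProd G H v).dist (g, a) (g', b)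
      = H.dist a v + (rootedProd G H v).dist (g, v) (g', b) := by
  have hP := rootedProd_connected (v := v) hG hH
  refine le_antisymm ?_ ?_
  · calc (rootedProd G H v).dist (g, a) (g', b)
        ≤ (rootedProd G H v).dist (g, a) (g, v) + (rootedProd G H v).dist (g, v) (g', b) :=
          hP.dist_triangle
      _ = H.dist a v + (rootedProd G H v).dist (g, v) (g', b) := by rw [dist_copy hH]
  · classical
    obtain ⟨p, hp⟩ := (hP ((g : V), a) ((g' : V), b)).exists_walk_length_eq_dist
    have hmem : ((g : V), v) ∈ p.support := root_mem_support p hgg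
    have hsplit := congrArg Walk.length (p.take_spec hmem)
    rw [Walk.length_append] at hsplit
    have h1 : H.dist a v ≤ (p.takeUntil _ hmem).length := by
      obtain ⟨q, hq⟩ := exists_walk_snd (p.takeUntil _ hmem)
      exact le_trans (SimpleGraph.dist_le q) hq
    have h2 : (rootedProd G H v).dist (g, v) (g', b) ≤ (p.dropUntil _ hmem).length :=
      SimpleGraph.dist_le _
    omega

/-- Non-bipartite parity: for any root, some adjacent pair is equidistant from it. -/
lemma exists_adj_dist_eq (hH : H.Connected) (hnb : ¬ H.Colorable 2) (r : W) :
    ∃ a b, H.Adj a b ∧ H.dist a r = H.dist b r := by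
  by_contra hcon
  push_neg at hcon
  refine hnb ?_
  have C : H.Coloring (ZMod 2) := Coloring.mk (fun u => (H.dist u r : ZMod 2)) ?_
  · simpa using C.colorable
  · intro a b hab
    have hne := hcon a b hab
    have h1 : H.dist a r ≤ H.dist b r + 1 := by
      have := hH.dist_triangle (u := a) (v := b) (w := r)
      rw [SimpleGraph.dist_eq_one_iff_adj.2 hab] at this; omega
    have h2 : H.dist b r ≤ H.dist a r + 1 := by
      have := hH.dist_triangle (u := b) (v := a) (w := r)
      rw [SimpleGraph.dist_eq_one_iff_adj.2 hab.symm] at this; omega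
    have : H.dist a r = H.dist b r + 1 ∨ H.dist b r = H.dist a r + 1 := by omega
    simp only [ne_eq]
    rcases this with h | h <;> rw [h] <;> push_cast <;> simp

lemma edge_of_not_colorable (hnb : ¬ H.Colorable 2) : ∃ a b, H.Adj a b := by
  by_contra hcon
  push_neg at hcon
  exact hnb ⟨Coloring.mk (fun _ => 0) (fun {a b} hab => absurd hab (hcon a b))⟩

lemma two_le_card_generator (hH : H.Connected) (hnb : ¬ H.Colorable 2)
    {S : Finset W} (h : IsLocalMetricGenerator H ↑S) : 2 ≤ S.card := by
  obtain ⟨a0, b0, hab0⟩ := edge_of_not_colorable hnb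
  obtain ⟨w0, hw0, -⟩ := h hab0
  by_contra hlt
  push_neg at hlt
  have hone : ∀ x ∈ S, x = w0 := by
    intro x hx
    exact Finset.card_le_one.1 (by omega) x hx w0 hw0
  obtain ⟨a, b, hab, hdist⟩ := exists_adj_dist_eq hH hnb w0
  obtain ⟨w1, hw1, hne1⟩ := h hab
  rw [hone w1 hw1] at hne1
  exact hne1 hdist

lemma univ_isGenerator {V' : Type*} [Fintype V'] {G' : SimpleGraph V'} (hG : G'.Connected) :
    IsLocalMetricGenerator G' ↑(Finset.univ : Finset V') := by
  intro a b hab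
  refine ⟨a, by simp, ?_⟩
  rw [SimpleGraph.dist_self, SimpleGraph.dist_comm]
  exact fun hc => hab.ne ((hG.dist_eq_zero_iff).1 hc.symm)

lemma exists_localMetricBasis {V' : Type*} [Fintype V'] {G' : SimpleGraph V'} (hG : G'.Connected) :
    ∃ S : Finset V', IsLocalMetricBasis G' S := by
  have hne : {k | ∃ S : Finset V', IsLocalMetricGenerator G' ↑S ∧ S.card = k}.Nonempty :=
    ⟨_, Finset.univ, univ_isGenerator hG, rfl⟩
  obtain ⟨S, hS, hcard⟩ := Nat.sInf_mem hne
  exact ⟨S, hS, hcard⟩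

lemma localMetricDim_le {V' : Type*} [Fintype V'] {G' : SimpleGraph V'} {S : Finset V'}
    (h : IsLocalMetricGenerator G' ↑S) : localMetricDim G' ≤ S.card :=
  Nat.sInf_le ⟨S, h, rfl⟩

/-- Every copy of `H` meets every local metric generator of the rooted product. -/
lemma copy_hit (hG : G.Connected) (hH : H.Connected) (hnb : ¬ H.Colorable 2)
    {S : Finset (V × W)} (hS : IsLocalMetricGenerator (rootedProd G H v) ↑S) (g : V) :
    ∃ c, (g, c) ∈ S := by
  obtain ⟨a, b, hab, hdist⟩ := exists_adj_dist_eq hH hnb v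
  have hadjP : (rootedProd G H v).Adj (g, a) (g, b) :=
    rootedProd_adj.2 ⟨by simp [hab.ne], Or.inl ⟨rfl, hab⟩⟩
  obtain ⟨⟨g', c⟩, hmem, hne⟩ := hS hadjP
  by_cases hg : g' = g
  · exact ⟨c, hg ▸ hmem⟩
  · exfalso
    apply hne
    rw [dist_cross hG hH (fun h => hg h.symm) a c,
        dist_cross hG hH (fun h => hg h.symm) b c, hdist]

end Aux

/-- dim_l(G ∘_v H) = n iff dim_l(H) = 2 and the root v belongs to some local
metric basis of H. -/
theorem localMetricDim_rootedProd_eq_card_iff {V W : Type*} [Fintype V] [Fintype W]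
    (G : SimpleGraph V) (H : SimpleGraph W) (v : W) (hG : G.Connected) (hH : H.Connected)
    (hnb : ¬ H.Colorable 2) (hn : 2 ≤ Fintype.card V) :
    localMetricDim (rootedProd G H v) = Fintype.card V ↔
      localMetricDim H = 2 ∧ ∃ B : Finset W, IsLocalMetricBasis H B ∧ v ∈ B := by
  classical
  have hP : (rootedProd G H v).Connected := rootedProd_connected hG hH
  have hVne : Nonempty V := Fintype.card_pos_iff.1 (by omega)
  -- dim H ≥ 2
  have h2le : 2 ≤ localMetricDim H := by
    obtain ⟨B₀, hB₀gen, hB₀card⟩ := exists_localMetricBasis hH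
    exact hB₀card ▸ two_le_card_generator hH hnb hB₀gen
  -- lower bound: localMetricDim (rootedProd G H v) ≥ card V
  have hlow : Fintype.card V ≤ localMetricDim (rootedProd G H v) := by
    obtain ⟨S₀, hS₀gen, hS₀card⟩ := exists_localMetricBasis hP
    choose c hc using fun g : V => copy_hit hG hH hnb hS₀gen g
    rw [← hS₀card, ← Finset.card_univ]
    refine Finset.card_le_card_of_injOn (fun g => (g, c g)) (fun g _ => hc g) ?_
    intro g1 _ g2 _ hgg
    exact congrArg Prod.fst hgg
  constructor
  · -- forward direction
    intro hdim
    obtain ⟨S, hSgen, hScard⟩ := exists_localMetricBasis hP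
    rw [hdim] at hScard
    choose c hc using fun g : V => copy_hit hG hH hnb hSgen g
    have himg : Finset.univ.image (fun g : V => (g, c g)) = S := by
      apply Finset.eq_of_subset_of_card_le
      · intro x hx
        obtain ⟨g, -, rfl⟩ := Finset.mem_image.1 hx
        exact hc g
      · rw [hScard, Finset.card_image_of_injective _ (fun g1 g2 h => congrArg Prod.fst h),
          Finset.card_univ]
    have hform : ∀ x ∈ S, x = (x.1, c x.1) := by
      intro x hx
      rw [← himg] at hx
      obtain ⟨g, -, rfl⟩ := Finset.mem_image.1 hx
      rfl
    obtain ⟨g0⟩ := hVne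
    -- {v, c g0} is a local metric generator of H
    have hgen : IsLocalMetricGenerator H ↑({v, c g0} : Finset W) := by
      intro a b hab
      have hadjP : (rootedProd G H v).Adj (g0, a) (g0, b) :=
        rootedProd_adj.2 ⟨by simp [hab.ne], Or.inl ⟨rfl, hab⟩⟩
      obtain ⟨x, hx, hne⟩ := hSgen hadjP
      rw [hform x hx] at hne
      by_cases hg : x.1 = g0
      · rw [hg, dist_copy hH, dist_copy hH] at hne
        exact ⟨c g0, by simp, hne⟩
      · rw [dist_cross hG hH (fun h => hg h.symm) a (c x.1),
          dist_cross hG hH (fun h => hg h.symm) b (c x.1)] at hne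
        refine ⟨v, by simp, ?_⟩
        intro hc'
        exact hne (by rw [hc'])
    have hcard2 : ({v, c g0} : Finset W).card ≤ 2 := Finset.card_insert_le _ _ |>.trans (by simp)
    have hdimH : localMetricDim H = 2 :=
      le_antisymm (le_trans (localMetricDim_le hgen) hcard2) h2le
    refine ⟨hdimH, {v, c g0}, ⟨hgen, ?_⟩, by simp⟩
    have := localMetricDim_le hgen
    omega
  · -- backward direction
    rintro ⟨hdim2, B, ⟨hBgen, hBcard⟩, hvB⟩
    rw [hdim2] at hBcard
    obtain ⟨w, hw⟩ : ∃ w, B.erase v = {w} :=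
      Finset.card_eq_one.1 (by rw [Finset.card_erase_of_mem hvB, hBcard])
    have hwv : w ≠ v := (Finset.mem_erase.1 (hw ▸ Finset.mem_singleton_self w)).1
    have hBmem : ∀ x ∈ B, x = v ∨ x = w := by
      intro x hx
      by_cases h : x = v
      · exact Or.inl h
      · right
        have : x ∈ B.erase v := Finset.mem_erase.2 ⟨h, hx⟩
        rw [hw] at this
        exact Finset.mem_singleton.1 this
    set S : Finset (V × W) := Finset.univ.image (fun g : V => (g, w)) with hSdef
    have hScard : S.card = Fintype.card V := by
      rw [hSdef, Finset.card_image_of_injective _ (fun g1 g2 h => congrArg Prod.fst h),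
        Finset.card_univ]
    have hSmem : ∀ g : V, (g, w) ∈ S := fun g => Finset.mem_image.2 ⟨g, Finset.mem_univ g, rfl⟩
    have hgen : IsLocalMetricGenerator (rootedProd G H v) ↑S := by
      rintro ⟨gx, a⟩ ⟨gy, b⟩ hadj
      rcases rootedProd_adj.1 hadj with ⟨hne, ⟨h1, hadjH⟩ | ⟨h1, h2, hadjG⟩⟩
      · -- same copy
        replace h1 : gx = gy := h1
        replace hadjH : H.Adj a b := hadjH
        subst h1
        obtain ⟨z, hz, hzne⟩ := hBgen hadjH
        rcases hBmem z hz with hzv | hzw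
        · rw [hzv] at hzne
          obtain ⟨g', hg'⟩ := Fintype.exists_ne_of_one_lt_card (by omega : 1 < Fintype.card V) gx
          refine ⟨(g', w), hSmem g', ?_⟩
          rw [dist_cross hG hH (Ne.symm hg') a w, dist_cross hG hH (Ne.symm hg') b w]
          omega
        · rw [hzw] at hzne
          refine ⟨(gx, w), hSmem gx, ?_⟩
          rw [dist_copy hH, dist_copy hH]
          exact hzne
      · -- adjacent roots
        replace h1 : a = v := h1
        replace h2 : b = v := h2
        replace hadjG : G.Adj gx gy := hadjG
        have hg : gx ≠ gy := hadjG.ne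
        refine ⟨(gx, w), hSmem gx, ?_⟩
        rw [h1, h2, dist_copy hH,
          SimpleGraph.dist_comm (G := rootedProd G H v) (u := (gy, v)) (v := (gx, w)),
          dist_cross hG hH hg w v]
        have hpos : (rootedProd G H v).dist (gx, v) (gy, v) ≠ 0 := by
          rw [Ne, hP.dist_eq_zero_iff]
          exact fun h => hg (congrArg Prod.fst h)
        rw [SimpleGraph.dist_comm (G := H) (u := w) (v := v)]
        omega
    refine le_antisymm ?_ hlow
    rw [← hScard]
    exact localMetricDim_le hgen
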